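/- (Basis property in the proof of Theorem 3.) Suppose β̂ > β > 0, c_V > 0, and (β̂ − β)(c_I − c_P) + β c_V γ ≠ 0. Let z = (x_C, x_S, x_R) ∈ ℝ³ satisfy x_S > 0 and 0 < 1 − x_S − x_R. Then the three vectors g_V(z), [g_P, g_V](z), and [f, [g_P, g_V]](z) are linearly independent, hence form a basis of ℝ³. -/

import Mathlib

/-! Writing `x_I = 1 - x_S - x_R`, the three vectors are triangular in reverse coordinate order:
`g_V(z)` has second coordinate `-x_S ≠ 0`, `[g_P, g_V](z)` has second coordinate `0` and third
coordinate `(β̂ - β) x_S x_I ≠ 0`, and `[f, [g_P, g_V]](z)` is a nonzero multiple of `(1, 0, 0)`. -/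

noncomputable section

/-- Drift vector field of the Mayer-form SIRI dynamics, `z = (x_C, x_S, x_R)`. -/
def fVec (cP cI γ : ℝ) (z : ℝ × ℝ × ℝ) : ℝ × ℝ × ℝ :=
  (cP * (z.2.1 + z.2.2) + cI * (1 - z.2.1 - z.2.2), 0, γ * (1 - z.2.1 - z.2.2))

/-- Control vector field for the protection input. -/
def gPVec (β βh cP : ℝ) (z : ℝ × ℝ × ℝ) : ℝ × ℝ × ℝ :=
  (-(cP * (z.2.1 + z.2.2)), -(β * z.2.1 * (1 - z.2.1 - z.2.2)),
    -(βh * z.2.2 * (1 - z.2.1 - z.2.2)))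

/-- Control vector field for the vaccination input. -/
def gVVec (cV : ℝ) (z : ℝ × ℝ × ℝ) : ℝ × ℝ × ℝ := (cV * z.2.1, -z.2.1, z.2.1)

/-- Lie bracket of two vector fields on `ℝ³`:
`[X, Y](z) = DY(z) X(z) − DX(z) Y(z)`, where `D` is the Fréchet derivative. -/
def lieBr (X Y : ℝ × ℝ × ℝ → ℝ × ℝ × ℝ) (z : ℝ × ℝ × ℝ) : ℝ × ℝ × ℝ :=
  fderiv ℝ Y z (X z) - fderiv ℝ X z (Y z)

open ContinuousLinearMap

lemma lieBr_eq_of_hasFDerivAt {X Y : ℝ × ℝ × ℝ → ℝ × ℝ × ℝ} {z : ℝ × ℝ × ℝ}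
    {X' Y' : (ℝ × ℝ × ℝ) →L[ℝ] ℝ × ℝ × ℝ} (hX : HasFDerivAt X X' z) (hY : HasFDerivAt Y Y' z) :
    lieBr X Y z = Y' (X z) - X' (Y z) := by
  rw [lieBr, hX.fderiv, hY.fderiv]

section Coordinates

variable (z : ℝ × ℝ × ℝ)

lemma hasFDerivAt_susceptible :
    HasFDerivAt (fun z : ℝ × ℝ × ℝ => z.2.1) ((fst ℝ ℝ ℝ).comp (snd ℝ ℝ (ℝ × ℝ))) z :=
  hasFDerivAt_fst.comp z hasFDerivAt_snd

lemma hasFDerivAt_recovered :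
    HasFDerivAt (fun z : ℝ × ℝ × ℝ => z.2.2) ((snd ℝ ℝ ℝ).comp (snd ℝ ℝ (ℝ × ℝ))) z :=
  hasFDerivAt_snd.comp z hasFDerivAt_snd

lemma hasFDerivAt_infected :
    HasFDerivAt (fun z : ℝ × ℝ × ℝ => 1 - z.2.1 - z.2.2)
      (0 - (fst ℝ ℝ ℝ).comp (snd ℝ ℝ (ℝ × ℝ)) - (snd ℝ ℝ ℝ).comp (snd ℝ ℝ (ℝ × ℝ))) z :=
  ((hasFDerivAt_const 1 z).sub (hasFDerivAt_susceptible z)).sub (hasFDerivAt_recovered z)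

end Coordinates

lemma lieBr_gPVec_gVVec (β βh cP cV : ℝ) (z : ℝ × ℝ × ℝ) :
    lieBr (gPVec β βh cP) (gVVec cV) z =
      (-(β * cV * z.2.1 * (1 - z.2.1 - z.2.2)), 0, (βh - β) * z.2.1 * (1 - z.2.1 - z.2.2)) := by
  have hS := hasFDerivAt_susceptible z
  have hR := hasFDerivAt_recovered z
  have hI := hasFDerivAt_infected z
  have hP : HasFDerivAt (gPVec β βh cP) _ z :=
    ((hS.add hR).const_mul cP).neg.prodMk
      (((hS.const_mul β).mul hI).neg.prodMk ((hR.const_mul βh).mul hI).neg)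
  have hV : HasFDerivAt (gVVec cV) _ z := (hS.const_mul cV).prodMk (hS.neg.prodMk hS)
  rw [lieBr_eq_of_hasFDerivAt hP hV]
  simp only [gPVec, gVVec, prod_apply, add_apply, sub_apply, neg_apply, smul_apply, comp_apply,
    coe_fst', coe_snd', smul_eq_mul, mul_neg, mul_zero, neg_neg, neg_zero, neg_add_rev, smul_add,
    neg_add_cancel, zero_sub, sub_self, sub_zero, add_zero, sub_neg_eq_add, Prod.mk_sub_mk,
    Prod.ext_iff, neg_inj]
  refine ⟨?_, ?_, ?_⟩ <;> ring

lemma lieBr_fVec_lieBr_gPVec_gVVec (β βh γ cP cV cI : ℝ) (z : ℝ × ℝ × ℝ) :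
    lieBr (fVec cP cI γ) (lieBr (gPVec β βh cP) (gVVec cV)) z =
      (((βh - β) * (cI - cP) + β * cV * γ) * (z.2.1 * (1 - z.2.1 - z.2.2)), 0, 0) := by
  have hS := hasFDerivAt_susceptible z
  have hR := hasFDerivAt_recovered z
  have hI := hasFDerivAt_infected z
  have hf : HasFDerivAt (fVec cP cI γ) _ z :=
    (((hS.add hR).const_mul cP).add (hI.const_mul cI)).prodMk
      ((hasFDerivAt_const 0 z).prodMk (hI.const_mul γ))
  have hB : HasFDerivAt (lieBr (gPVec β βh cP) (gVVec cV)) _ z :=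
    (((hS.const_mul (β * cV)).mul hI).neg.prodMk
      ((hasFDerivAt_const 0 z).prodMk ((hS.const_mul (βh - β)).mul hI))).congr_of_eventuallyEq
      (.of_forall (lieBr_gPVec_gVVec β βh cP cV))
  rw [lieBr_eq_of_hasFDerivAt hf hB, lieBr_gPVec_gVVec]
  simp only [fVec, prod_apply, add_apply, sub_apply, neg_apply, smul_apply, comp_apply, zero_apply,
    coe_fst', coe_snd', smul_eq_mul, mul_neg, mul_zero, neg_neg, neg_zero, neg_add_rev, smul_add,
    zero_add, zero_sub, sub_self, add_zero, sub_neg_eq_add, Prod.mk_sub_mk, Prod.ext_iff, true_and]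
  constructor <;> ring

lemma linearIndependent_of_triangular {K : Type*} [Field K] {a b c d e k : K}
    (hb : b ≠ 0) (he : e ≠ 0) (hk : k ≠ 0) :
    LinearIndependent K ![(a, b, c), (d, 0, e), (k, 0, 0)] := by
  rw [Fintype.linearIndependent_iff]
  intro w hw
  simp only [Fin.sum_univ_three, Matrix.cons_val_zero, Matrix.cons_val_one, Matrix.cons_val_two,
    Matrix.head_cons, Matrix.tail_cons, Prod.smul_mk, Prod.mk_add_mk, smul_eq_mul, mul_zero,
    add_zero, Prod.ext_iff, Prod.fst_zero, Prod.snd_zero] at hw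
  obtain ⟨hfst, hsnd, hthd⟩ := hw
  have hw0 : w 0 = 0 := (mul_eq_zero.1 hsnd).resolve_right hb
  have hw1 : w 1 = 0 := by simpa [hw0, he] using hthd
  have hw2 : w 2 = 0 := by simpa [hw0, hw1, hk] using hfst
  intro i
  fin_cases i <;> assumption

theorem siri_bracket_basis_general
    (β βh γ cP cV cI : ℝ)
    (hβhβ : β < βh)
    (hden : (βh - β) * (cI - cP) + β * cV * γ ≠ 0)
    (z : ℝ × ℝ × ℝ) (hxS : 0 < z.2.1) (hxI : 0 < 1 - z.2.1 - z.2.2) :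
    LinearIndependent ℝ
      ![gVVec cV z, lieBr (gPVec β βh cP) (gVVec cV) z,
        lieBr (fVec cP cI γ) (lieBr (gPVec β βh cP) (gVVec cV)) z] := by
  rw [lieBr_fVec_lieBr_gPVec_gVVec, lieBr_gPVec_gVVec]
  have hSI : z.2.1 * (1 - z.2.1 - z.2.2) ≠ 0 := (mul_pos hxS hxI).ne'
  exact linearIndependent_of_triangular (neg_ne_zero.2 hxS.ne')
    (by rw [mul_assoc]; exact mul_ne_zero (sub_ne_zero.2 hβhβ.ne') hSI) (mul_ne_zero hden hSI)

/-- basis property in the proof of Theorem 3. -/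
theorem siri_bracket_basis
    (β βh γ cP cV cI : ℝ)
    (hβ : 0 < β) (hβhβ : β < βh) (hγ : 0 < γ)
    (hcP : 0 < cP) (hcV : 0 < cV) (hcI : 0 < cI)
    (hden : (βh - β) * (cI - cP) + β * cV * γ ≠ 0)
    (z : ℝ × ℝ × ℝ) (hxS : 0 < z.2.1) (hxI : 0 < 1 - z.2.1 - z.2.2) :
    LinearIndependent ℝ
      ![gVVec cV z, lieBr (gPVec β βh cP) (gVVec cV) z,
        lieBr (fVec cP cI γ) (lieBr (gPVec β βh cP) (gVVec cV)) z] :=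
  siri_bracket_basis_general β βh γ cP cV cI hβhβ hden z hxS hxI
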